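/- arXiv:1208.2577 — 3 statements merged into one kernel-verified Lean document; each statement's English description precedes it below -/
import Mathlib

section
/- For all complex z with |Re z| < π/2 we have |tan z| ≤ max(1, tan|Re z|); more precisely, if |Re z| ≤ π/4 then |tan z| ≤ 1, and if π/4 ≤ |Re z| < π/2 then |tan z| ≤ tan|Re z| < 1/(π/2 - |Re z|). -/
/-!
Writing `z = x + iy`, one has `‖tan z‖² = (sin² x + sinh² y) / (cos² x + sinh² y)`.
Adding the same `sinh² y ≥ 0` to numerator and denominator moves the fraction `sin² x / cos² x`
towards `1`, so `‖tan z‖` is at most `1` when `sin² x ≤ cos² x` (that is `|x| ≤ π/4`) and at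
most `|tan x| = tan |x|` otherwise. The last bound is `tan x = 1 / tan (π/2 - x) < 1 / (π/2 - x)`.
-/

open scoped Real

theorem add_div_add_le_div {K : Type*} [Field K] [LinearOrder K] [IsStrictOrderedRing K]
    {a b t : K} (hba : b ≤ a) (hb : 0 < b) (ht : 0 ≤ t) : (a + t) / (b + t) ≤ a / b := by
  rw [div_le_div_iff₀ (by positivity) hb]
  nlinarith [mul_le_mul_of_nonneg_left hba ht]

namespace Complex

theorem sq_norm_sin (z : ℂ) : ‖sin z‖ ^ 2 = Real.sin z.re ^ 2 + Real.sinh z.im ^ 2 := by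
  have hsin : sin z = (Real.sin z.re * Real.cosh z.im : ℝ)
      + (Real.cos z.re * Real.sinh z.im : ℝ) * I := by
    rw [sin_eq]; push_cast; ring
  rw [hsin, Complex.sq_norm, normSq_add_mul_I]
  nlinarith [Real.sin_sq_add_cos_sq z.re, Real.cosh_sq z.im]

theorem sq_norm_cos (z : ℂ) : ‖cos z‖ ^ 2 = Real.cos z.re ^ 2 + Real.sinh z.im ^ 2 := by
  have hcos : cos z = (Real.cos z.re * Real.cosh z.im : ℝ)
      + (-(Real.sin z.re * Real.sinh z.im) : ℝ) * I := by
    rw [cos_eq]; push_cast; ring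
  rw [hcos, Complex.sq_norm, normSq_add_mul_I]
  nlinarith [Real.sin_sq_add_cos_sq z.re, Real.cosh_sq z.im]

theorem sq_norm_tan (z : ℂ) :
    ‖tan z‖ ^ 2 =
      (Real.sin z.re ^ 2 + Real.sinh z.im ^ 2) / (Real.cos z.re ^ 2 + Real.sinh z.im ^ 2) := by
  rw [tan_eq_sin_div_cos, norm_div, div_pow, sq_norm_sin, sq_norm_cos]

theorem norm_tan_le_one {z : ℂ} (h : |z.re| ≤ π / 4) : ‖tan z‖ ≤ 1 := by
  have hcos_two_mul : 0 ≤ Real.cos (2 * z.re) :=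
    Real.cos_nonneg_of_neg_pi_div_two_le_of_le (by linarith [neg_abs_le z.re])
      (by linarith [le_abs_self z.re])
  have hsin_le_cos : Real.sin z.re ^ 2 ≤ Real.cos z.re ^ 2 := by
    linarith [Real.cos_two_mul' z.re]
  rw [← sq_le_one_iff₀ (norm_nonneg _), sq_norm_tan]
  exact div_le_one_of_le₀ (by linarith) (by positivity)

theorem norm_tan_le_tan_abs_re {z : ℂ} (h₁ : π / 4 ≤ |z.re|) (h₂ : |z.re| < π / 2) :
    ‖tan z‖ ≤ Real.tan |z.re| := by
  have hcos_pos : 0 < Real.cos z.re := by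
    rw [← Real.cos_abs]
    exact Real.cos_pos_of_mem_Ioo ⟨by linarith [abs_nonneg z.re], h₂⟩
  have hcos_two_mul : Real.cos (2 * z.re) ≤ 0 := by
    rw [← Real.cos_abs, abs_mul, abs_two]
    exact Real.cos_nonpos_of_pi_div_two_le_of_le (by linarith) (by linarith)
  have hcos_le_sin : Real.cos z.re ^ 2 ≤ Real.sin z.re ^ 2 := by
    linarith [Real.cos_two_mul' z.re]
  have htan_sq : Real.tan |z.re| ^ 2 = Real.sin z.re ^ 2 / Real.cos z.re ^ 2 := by
    rw [Real.tan_eq_sin_div_cos, div_pow, Real.sin_sq, Real.cos_abs, ← Real.sin_sq]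
  have htan_nonneg : 0 ≤ Real.tan |z.re| :=
    Real.tan_nonneg_of_nonneg_of_le_pi_div_two (abs_nonneg _) h₂.le
  rw [← sq_le_sq₀ (norm_nonneg _) htan_nonneg, sq_norm_tan, htan_sq]
  exact add_div_add_le_div hcos_le_sin (by positivity) (sq_nonneg _)

end Complex

theorem Real.tan_lt_one_div_pi_div_two_sub {x : ℝ} (hx₀ : 0 < x) (hx : x < π / 2) :
    Real.tan x < 1 / (π / 2 - x) := by
  have hcompl_pos : 0 < π / 2 - x := by linarith
  rw [← sub_sub_cancel (π / 2) x, Real.tan_pi_div_two_sub, sub_sub_cancel, one_div]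
  exact inv_strictAnti₀ hcompl_pos (Real.lt_tan hcompl_pos (by linarith))

/-- For complex `z` with `|Re z| < π/2` we have `|tan z| ≤ max(1, tan |Re z|)`;
more precisely, if `|Re z| ≤ π/4` then `|tan z| ≤ 1`, and if `π/4 ≤ |Re z| < π/2`
then `|tan z| ≤ tan |Re z| < 1/(π/2 - |Re z|)`. -/
theorem stmt3 (z : ℂ) (h : |z.re| < Real.pi / 2) :
    ‖Complex.tan z‖ ≤ max 1 (Real.tan |z.re|) ∧
    (|z.re| ≤ Real.pi / 4 → ‖Complex.tan z‖ ≤ 1) ∧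
    (Real.pi / 4 ≤ |z.re| →
      ‖Complex.tan z‖ ≤ Real.tan |z.re| ∧
      Real.tan |z.re| < 1 / (Real.pi / 2 - |z.re|)) := by
  have large_re (h₁ : π / 4 ≤ |z.re|) :
      ‖Complex.tan z‖ ≤ Real.tan |z.re| ∧ Real.tan |z.re| < 1 / (π / 2 - |z.re|) :=
    ⟨Complex.norm_tan_le_tan_abs_re h₁ h,
      Real.tan_lt_one_div_pi_div_two_sub (by linarith [Real.pi_pos]) h⟩
  refine ⟨?_, Complex.norm_tan_le_one, large_re⟩
  rcases le_total |z.re| (π / 4) with hsmall | hlarge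
  · exact le_max_of_le_left (Complex.norm_tan_le_one hsmall)
  · exact le_max_of_le_right (large_re hlarge).1
end

section
/- Let g : Ω → ℂ be holomorphic on a domain Ω ⊂ ℂ with a repelling fixed point ζ₀ (g(ζ₀) = ζ₀, |g′(ζ₀)| > 1). Then there is a disk Δ ∋ ζ₀ with closure(Δ) ⊂ g(Δ) and g injective on Δ; moreover, if g_j → g uniformly on a neighborhood of closure(Δ), then for all large j, g_j has a fixed point ζ_j ∈ Δ with |g_j′(ζ_j)| > 1, and ζ_j → ζ₀. -/
/-!
Fix `c > 0` with `1 + 2c < |g'(ζ₀)|` and a closed disk around `ζ₀` on which `|g' - g'(ζ₀)| ≤ c`.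
There `g` approximates multiplication by `g'(ζ₀)` with error constant `c`, so it is injective, and
the quantitative inverse function theorem (Newton iteration) shows that it maps the disk of
radius `δ / (|g'(ζ₀)| - c) < δ` onto a disk of radius `δ` around `g(ζ₀) = ζ₀`.

By Weierstrass, `g_j' → g'` uniformly on the half disk, so eventually the displacement
`z ↦ g_j z - z` approximates multiplication by `g'(ζ₀) - 1` with error `2c < |g'(ζ₀) - 1|`.
Its value at `ζ₀` is `g_j ζ₀ - g ζ₀ → 0`, so it has a zero `ζ_j` with
`|ζ_j - ζ₀| ≤ |g_j ζ₀ - ζ₀| / (|g'(ζ₀) - 1| - 2c)`, and `|g_j'(ζ_j)| ≥ |g'(ζ₀)| - 2c > 1`.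
-/

open Filter Topology Metric

open scoped NNReal

section ApproximatesScalar

variable {𝕜 : Type*} [RCLike 𝕜] {f : 𝕜 → 𝕜} {s : Set 𝕜} {a : 𝕜} {C : ℝ≥0}

theorem approximatesLinearOn_smul_of_norm_deriv_sub_le (hs : Convex ℝ s)
    (hf : ∀ z ∈ s, DifferentiableAt 𝕜 f z) (hC : ∀ z ∈ s, ‖deriv f z - a‖ ≤ C) :
    ApproximatesLinearOn f (a • ContinuousLinearMap.id 𝕜 𝕜) s C := by
  rw [ApproximatesLinearOn.approximatesLinearOn_iff_lipschitzOnWith]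
  refine hs.lipschitzOnWith_of_nnnorm_deriv_le (fun z hz => ?_) fun z hz => ?_
  · exact (hf z hz).sub (differentiableAt_id.const_smul a)
  · have hderiv : HasDerivAt (f - ⇑(a • ContinuousLinearMap.id 𝕜 𝕜)) (deriv f z - a) z := by
      simpa using (hf z hz).hasDerivAt.sub ((hasDerivAt_id z).const_smul a)
    rw [← NNReal.coe_le_coe, coe_nnnorm, hderiv.deriv]
    exact hC z hz

namespace ApproximatesLinearOn

theorem mul_norm_sub_le_norm_image_sub
    (hf : ApproximatesLinearOn f (a • ContinuousLinearMap.id 𝕜 𝕜) s C) {x y : 𝕜}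
    (hx : x ∈ s) (hy : y ∈ s) : (‖a‖ - C) * ‖x - y‖ ≤ ‖f x - f y‖ := by
  have happrox : ‖f x - f y - a * (x - y)‖ ≤ C * ‖x - y‖ := by simpa using hf x hx y hy
  have htriangle := norm_sub_norm_le (a * (x - y)) (f x - f y)
  rw [norm_sub_rev (a * _), norm_mul] at htriangle
  linarith

theorem injOn_of_lt_norm (hf : ApproximatesLinearOn f (a • ContinuousLinearMap.id 𝕜 𝕜) s C)
    (hC : C < ‖a‖) : Set.InjOn f s := fun x hx y hy hxy => by
  have := hf.mul_norm_sub_le_norm_image_sub hx hy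
  rw [hxy, sub_self, norm_zero] at this
  exact sub_eq_zero.1 (norm_le_zero_iff.1 (nonpos_of_mul_nonpos_right this (by linarith)))

theorem closedBall_subset_image_closedBall
    (hf : ApproximatesLinearOn f (a • ContinuousLinearMap.id 𝕜 𝕜) s C) (ha : a ≠ 0) {b : 𝕜}
    {ε : ℝ} (hε : 0 ≤ ε) (hεs : closedBall b ε ⊆ s) :
    closedBall (f b) ((‖a‖ - C) * ε) ⊆ f '' closedBall b ε := by
  let inverse : (a • ContinuousLinearMap.id 𝕜 𝕜).NonlinearRightInverse :=
    { toFun := fun y => a⁻¹ * y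
      nnnorm := ‖a‖₊⁻¹
      bound' := fun y => by simp
      right_inv' := fun y => by simp [ha] }
  have := hf.surjOn_closedBall_of_nonlinearRightInverse inverse hε hεs
  simpa [inverse, Set.SurjOn] using this

theorem closedBall_subset_image_ball {b : 𝕜} {r : ℝ}
    (hf : ApproximatesLinearOn f (a • ContinuousLinearMap.id 𝕜 𝕜) (closedBall b r) C)
    (hr : 0 < r) (hexpand : 1 + C < ‖a‖) : closedBall (f b) r ⊆ f '' ball b r := by
  have hpos : 0 < ‖a‖ - C := by linarith
  have hsub : closedBall b (r / (‖a‖ - C)) ⊆ ball b r :=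
    closedBall_subset_ball (div_lt_self hr (by linarith))
  calc closedBall (f b) r = closedBall (f b) ((‖a‖ - C) * (r / (‖a‖ - C))) := by
        rw [mul_div_cancel₀ _ hpos.ne']
    _ ⊆ f '' closedBall b (r / (‖a‖ - C)) :=
        hf.closedBall_subset_image_closedBall (norm_pos_iff.1 (by linarith)) (by positivity)
          (hsub.trans ball_subset_closedBall)
    _ ⊆ f '' ball b r := Set.image_mono hsub

end ApproximatesLinearOn

theorem exists_zeros_tendsto_of_approximatesLinearOn {ι : Type*} {l : Filter ι} [l.NeBot]
    {F : ι → 𝕜 → 𝕜} {z₀ : 𝕜} {r : ℝ} (hr : 0 < r) (hC : C < ‖a‖)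
    (hF : ∀ᶠ i in l, ApproximatesLinearOn (F i) (a • ContinuousLinearMap.id 𝕜 𝕜)
      (closedBall z₀ r) C)
    (hF₀ : Tendsto (fun i => F i z₀) l (𝓝 0)) :
    ∃ ζ : ι → 𝕜, (∀ᶠ i in l, ζ i ∈ closedBall z₀ r ∧ F i (ζ i) = 0) ∧ Tendsto ζ l (𝓝 z₀) := by
  have hpos : 0 < ‖a‖ - C := by linarith
  have hsmall : ∀ᶠ i in l, ‖F i z₀‖ ≤ (‖a‖ - C) * r :=
    (tendsto_zero_iff_norm_tendsto_zero.1 hF₀).eventually (ge_mem_nhds (by positivity))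
  have hzero : ∀ᶠ i in l, ∃ z, z ∈ closedBall z₀ r ∧ F i z = 0 := by
    filter_upwards [hF, hsmall] with i hFi hi
    exact hFi.closedBall_subset_image_closedBall (norm_pos_iff.1 (by linarith)) hr.le le_rfl
      (by simpa using hi)
  obtain ⟨ζ, hζ⟩ := hzero.choice
  refine ⟨ζ, hζ, tendsto_iff_norm_sub_tendsto_zero.2 ?_⟩
  refine squeeze_zero' (Eventually.of_forall fun i => norm_nonneg _) ?_
    (by simpa using (tendsto_zero_iff_norm_tendsto_zero.1 hF₀).div_const (‖a‖ - C))
  filter_upwards [hF, hζ] with i hFi ⟨hζr, hζ0⟩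
  rw [le_div_iff₀ hpos, mul_comm]
  simpa [hζ0] using hFi.mul_norm_sub_le_norm_image_sub hζr (mem_closedBall_self hr.le)

end ApproximatesScalar

theorem TendstoUniformlyOn.deriv_closedBall {ι : Type*} {l : Filter ι} {F : ι → ℂ → ℂ}
    {f : ℂ → ℂ} {z : ℂ} {r r' : ℝ} (h : TendstoUniformlyOn F f l (closedBall z r))
    (hF : ∀ᶠ i in l, DifferentiableOn ℂ (F i) (ball z r)) (hr : r' < r) :
    TendstoUniformlyOn (deriv ∘ F) (deriv f) l (closedBall z r') :=
  (tendstoLocallyUniformlyOn_iff_forall_isCompact isOpen_ball).1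
    ((h.mono ball_subset_closedBall).tendstoLocallyUniformlyOn.deriv hF isOpen_ball) _
    (closedBall_subset_ball hr) (isCompact_closedBall z r')

theorem TendstoUniformlyOn.eventually_norm_deriv_sub_le {ι : Type*} {l : Filter ι}
    {F : ι → ℂ → ℂ} {f : ℂ → ℂ} {z₀ a : ℂ} {r r' c ε : ℝ}
    (h : TendstoUniformlyOn F f l (closedBall z₀ r))
    (hF : ∀ᶠ i in l, DifferentiableOn ℂ (F i) (ball z₀ r))
    (hf : ∀ z ∈ closedBall z₀ r, ‖deriv f z - a‖ ≤ c) (hε : 0 < ε) (hr : r' < r) :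
    ∀ᶠ i in l, ∀ z ∈ closedBall z₀ r', ‖deriv (F i) z - a‖ ≤ c + ε := by
  filter_upwards [Metric.tendstoUniformlyOn_iff.1 (h.deriv_closedBall hF hr) ε hε] with i hi z hz
  have hclose := (dist_comm _ _).trans_lt (hi z hz)
  rw [dist_eq_norm, Function.comp_apply] at hclose
  calc ‖deriv (F i) z - a‖ ≤ ‖deriv (F i) z - deriv f z‖ + ‖deriv f z - a‖ :=
        norm_sub_le_norm_sub_add_norm_sub _ _ _
    _ ≤ c + ε := by linarith [hf z (closedBall_subset_closedBall hr.le hz)]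

theorem exists_closedBall_subset_norm_deriv_sub_le {Ω : Set ℂ} {g : ℂ → ℂ} {z : ℂ}
    (hΩ : IsOpen Ω) (hg : DifferentiableOn ℂ g Ω) (hz : z ∈ Ω) {ε : ℝ} (hε : 0 < ε) :
    ∃ δ > 0, closedBall z δ ⊆ Ω ∧ ∀ w ∈ closedBall z δ, ‖deriv g w - deriv g z‖ ≤ ε := by
  have hcont : ContinuousAt (deriv g) z := ((hg.analyticOnNhd hΩ).deriv z hz).continuousAt
  have hnear : ∀ᶠ w in 𝓝 z, w ∈ Ω ∧ deriv g w ∈ closedBall (deriv g z) ε :=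
    (hΩ.eventually_mem hz).and (hcont.eventually (closedBall_mem_nhds _ hε))
  obtain ⟨δ, hδ, hball⟩ := nhds_basis_closedBall.eventually_iff.1 hnear
  exact ⟨δ, hδ, fun w hw => (hball hw).1, fun w hw => mem_closedBall_iff_norm.1 (hball hw).2⟩

theorem exists_repelling_fixedPoints_of_tendstoUniformlyOn {ι : Type*} {l : Filter ι} [l.NeBot]
    {gs : ι → ℂ → ℂ} {g : ℂ → ℂ} {ζ₀ d : ℂ} {δ : ℝ} {c : ℝ≥0} (hδ : 0 < δ) (hfix : g ζ₀ = ζ₀)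
    (hc : 0 < c) (hexpand : 1 + 2 * (c : ℝ) < ‖d‖)
    (hg : ∀ z ∈ closedBall ζ₀ δ, ‖deriv g z - d‖ ≤ c)
    (hgs : ∀ i, DifferentiableOn ℂ (gs i) (ball ζ₀ δ))
    (hconv : TendstoUniformlyOn gs g l (closedBall ζ₀ δ)) :
    ∃ ζ : ι → ℂ, (∀ᶠ i in l, ζ i ∈ ball ζ₀ δ ∧ gs i (ζ i) = ζ i ∧ 1 < ‖deriv (gs i) (ζ i)‖) ∧
      Tendsto ζ l (𝓝 ζ₀) := by
  have hsub : closedBall ζ₀ (δ / 2) ⊆ ball ζ₀ δ := closedBall_subset_ball (half_lt_self hδ)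
  have hderiv : ∀ᶠ i in l, ∀ z ∈ closedBall ζ₀ (δ / 2), ‖deriv (gs i) z - d‖ ≤ c + c :=
    hconv.eventually_norm_deriv_sub_le (Eventually.of_forall hgs) hg hc (half_lt_self hδ)
  have hdisplacement : ∀ᶠ i in l, ApproximatesLinearOn (fun z => gs i z - z)
      ((d - 1) • ContinuousLinearMap.id ℂ ℂ) (closedBall ζ₀ (δ / 2)) (c + c) := by
    filter_upwards [hderiv] with i hi
    refine approximatesLinearOn_smul_of_norm_deriv_sub_le (convex_closedBall _ _)
      (fun z hz => ?_) fun z hz => ?_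
    · exact ((hgs i).differentiableAt (isOpen_ball.mem_nhds (hsub hz))).sub differentiableAt_id
    · have hgsz := (hgs i).differentiableAt (isOpen_ball.mem_nhds (hsub hz))
      rw [(hgsz.hasDerivAt.fun_sub (hasDerivAt_id' z)).deriv, sub_sub_sub_cancel_right]
      exact_mod_cast hi z hz
  have hdisplacement₀ : Tendsto (fun i => gs i ζ₀ - ζ₀) l (𝓝 0) := by
    simpa [hfix] using (hconv.tendsto_at (mem_closedBall_self hδ.le)).sub_const ζ₀
  have hlt : ((c + c : ℝ≥0) : ℝ) < ‖d - 1‖ := by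
    push_cast
    linarith [norm_sub_norm_le d 1, norm_one (α := ℂ)]
  obtain ⟨ζ, hζ, hlim⟩ :=
    exists_zeros_tendsto_of_approximatesLinearOn (half_pos hδ) hlt hdisplacement hdisplacement₀
  refine ⟨ζ, ?_, hlim⟩
  filter_upwards [hζ, hderiv] with i ⟨hζr, hζfix⟩ hi
  refine ⟨hsub hζr, sub_eq_zero.1 hζfix, ?_⟩
  linarith [norm_sub_norm_le d (deriv (gs i) (ζ i)), norm_sub_rev d (deriv (gs i) (ζ i)), hi _ hζr]

/-- Persistence of repelling fixed points: if `g` has a repelling fixed point `ζ₀`,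
there is a disk `Δ ∋ ζ₀` with `closure Δ ⊆ g(Δ)` and `g` injective on `Δ`;
moreover any sequence of holomorphic maps converging uniformly to `g` on
`closure Δ` eventually has a repelling fixed point `ζ_j ∈ Δ` with `ζ_j → ζ₀`. -/
theorem stmt13 (Ω : Set ℂ) (hΩ : IsOpen Ω) (g : ℂ → ℂ)
    (hg : DifferentiableOn ℂ g Ω)
    (ζ₀ : ℂ) (hζ₀ : ζ₀ ∈ Ω) (hfix : g ζ₀ = ζ₀) (hrep : 1 < ‖deriv g ζ₀‖) :
    ∃ δ > (0 : ℝ), closure (Metric.ball ζ₀ δ) ⊆ Ω ∧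
      closure (Metric.ball ζ₀ δ) ⊆ g '' (Metric.ball ζ₀ δ) ∧
      Set.InjOn g (Metric.ball ζ₀ δ) ∧
      ∀ gs : ℕ → ℂ → ℂ, (∀ j, DifferentiableOn ℂ (gs j) Ω) →
        TendstoUniformlyOn gs g Filter.atTop (closure (Metric.ball ζ₀ δ)) →
        ∃ (ζ : ℕ → ℂ) (J : ℕ),
          (∀ j, J ≤ j → ζ j ∈ Metric.ball ζ₀ δ ∧ gs j (ζ j) = ζ j ∧
            1 < ‖deriv (gs j) (ζ j)‖) ∧
          Filter.Tendsto ζ Filter.atTop (𝓝 ζ₀) := by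
  set d := deriv g ζ₀
  obtain ⟨c, hc, hexpand⟩ : ∃ c : ℝ≥0, 0 < c ∧ 1 + 2 * (c : ℝ) < ‖d‖ :=
    ⟨Real.toNNReal ((‖d‖ - 1) / 4), Real.toNNReal_pos.2 (by linarith),
      by rw [Real.coe_toNNReal _ (by linarith)]; linarith⟩
  obtain ⟨δ, hδ, hδΩ, hderiv⟩ := exists_closedBall_subset_norm_deriv_sub_le hΩ hg hζ₀ hc
  have happrox : ApproximatesLinearOn g (d • ContinuousLinearMap.id ℂ ℂ) (closedBall ζ₀ δ) c :=
    approximatesLinearOn_smul_of_norm_deriv_sub_le (convex_closedBall ζ₀ δ)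
      (fun z hz => hg.differentiableAt (hΩ.mem_nhds (hδΩ hz))) hderiv
  refine ⟨δ, hδ, ?_⟩
  rw [closure_ball ζ₀ hδ.ne']
  refine ⟨hδΩ, ?_, (happrox.injOn_of_lt_norm (by linarith)).mono ball_subset_closedBall,
    fun gs hgs hconv => ?_⟩
  · simpa [hfix] using happrox.closedBall_subset_image_ball hδ (by linarith)
  · obtain ⟨ζ, hζ, hlim⟩ := exists_repelling_fixedPoints_of_tendstoUniformlyOn hδ hfix hc
      hexpand hderiv (fun j => (hgs j).mono (ball_subset_closedBall.trans hδΩ)) hconv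
    obtain ⟨J, hJ⟩ := eventually_atTop.1 hζ
    exact ⟨ζ, J, hJ, hlim⟩
end

section
/- Fix p ∈ ℂ. The reparametrization ε = ε̂ − p·ε̂² together with x = (1 − p·ε̂)·x̂ transforms the family f_ε(x) = x + (x² + ε²)(1 + pε + O(|x| + |ε|²)) into a family f̂_ε̂(x̂) = x̂ + (x̂² + ε̂²)(1 + O(|x̂| + |ε̂|²)) with no linear term in ε̂; i.e. after the change of variables the coefficient of ε̂ in the analogue of α vanishes. -/
open Filter Topology Asymptotics

/-! With `u = 1 - p ε̂`, the change of variables is the scaling `(ε, x) = u • (ε̂, x̂)` and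
`α̂(ε̂, x̂) = u α(u ε̂, u x̂)`. Writing `α = 1 + p ε + (q + 1) x + R` with `R = O(‖(ε, x)‖²)`,
`α̂ - 1 - (q + 1) x̂ = (u² - 1)(p ε̂ + (q + 1) x̂) + u R(u ε̂, u x̂)`: the `ε̂`-linear term `p ε̂`
of `α` is cancelled by the factor `u`, `u² - 1 = O(ε̂)` makes the first summand quadratic,
and the second is quadratic because `u` is bounded near `0`. -/

section BallBound

variable {E F G : Type*} [SeminormedAddCommGroup E] [SeminormedAddCommGroup F]
  [SeminormedAddCommGroup G]

theorem exists_bound_on_ball_iff_isBigO {g : E → F → G} :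
    (∃ C δ : ℝ, 0 < δ ∧ ∀ ε x, ‖ε‖ < δ → ‖x‖ < δ → ‖g ε x‖ ≤ C * (‖x‖ ^ 2 + ‖ε‖ ^ 2)) ↔
      (fun w : E × F => g w.1 w.2) =O[𝓝 0] fun w => ‖w‖ ^ 2 := by
  constructor
  · rintro ⟨C, δ, hδ, hg⟩
    have hsq : (fun w : E × F => ‖w.2‖ ^ 2 + ‖w.1‖ ^ 2) =O[𝓝 0] fun w => ‖w‖ ^ 2 := by
      refine IsBigO.of_bound 2 (Eventually.of_forall fun w => ?_)
      have h1 := norm_fst_le w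
      have h2 := norm_snd_le w
      rw [Real.norm_of_nonneg (by positivity), Real.norm_of_nonneg (by positivity)]
      nlinarith [norm_nonneg w.1, norm_nonneg w.2]
    refine (IsBigO.of_bound C ?_).trans hsq
    filter_upwards [Metric.ball_mem_nhds 0 hδ] with w hw
    rw [mem_ball_zero_iff, Prod.norm_def, max_lt_iff] at hw
    rw [Real.norm_of_nonneg (by positivity)]
    exact hg w.1 w.2 hw.1 hw.2
  · intro h
    obtain ⟨c, hc0, hc⟩ := h.exists_pos
    obtain ⟨δ, hδ, hball⟩ := Metric.eventually_nhds_iff.1 hc.bound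
    refine ⟨c, δ, hδ, fun ε x hε hx => ?_⟩
    have hw : dist (ε, x) 0 < δ := by
      rw [dist_zero_right, Prod.norm_mk, max_lt_iff]
      exact ⟨hε, hx⟩
    calc ‖g ε x‖ ≤ c * ‖‖(ε, x)‖ ^ 2‖ := hball hw
      _ ≤ c * (‖x‖ ^ 2 + ‖ε‖ ^ 2) := by
        rw [norm_pow, norm_norm, Prod.norm_mk]
        gcongr
        rcases max_choice ‖ε‖ ‖x‖ with hm | hm <;> rw [hm] <;>
          nlinarith [sq_nonneg ‖x‖, sq_nonneg ‖ε‖]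

end BallBound

section Normalization

variable {𝕜 : Type*} [NormedField 𝕜]

def normalizedCoeff (p : 𝕜) (α : 𝕜 → 𝕜 → 𝕜) (ε x : 𝕜) : 𝕜 :=
  (1 - p * ε) * α ((1 - p * ε) * ε) ((1 - p * ε) * x)

theorem mul_normalizedCoeff_family {f α : 𝕜 → 𝕜 → 𝕜}
    (hf : ∀ ε x, f ε x = x + (x ^ 2 + ε ^ 2) * α ε x) (p ε x : 𝕜) :
    (1 - p * ε) * (x + (x ^ 2 + ε ^ 2) * normalizedCoeff p α ε x) =
      f (ε - p * ε ^ 2) ((1 - p * ε) * x) := by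
  rw [show ε - p * ε ^ 2 = (1 - p * ε) * ε by ring, hf, normalizedCoeff]
  ring

theorem normalizedCoeff_sub (p q : 𝕜) (α : 𝕜 → 𝕜 → 𝕜) (ε x : 𝕜) :
    normalizedCoeff p α ε x - 1 - (q + 1) * x =
      p * ε * (p * ε - 2) * (p * ε + (q + 1) * x) +
        (1 - p * ε) * (α ((1 - p * ε) * ε) ((1 - p * ε) * x) - 1 - p * ((1 - p * ε) * ε)
          - (q + 1) * ((1 - p * ε) * x)) := by
  rw [normalizedCoeff]
  ring

theorem isBigO_normalizedCoeff_sub {p q : 𝕜} {α : 𝕜 → 𝕜 → 𝕜}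
    (hα : (fun w : 𝕜 × 𝕜 => α w.1 w.2 - 1 - p * w.1 - (q + 1) * w.2) =O[𝓝 0]
      fun w => ‖w‖ ^ 2) :
    (fun w : 𝕜 × 𝕜 => normalizedCoeff p α w.1 w.2 - 1 - (q + 1) * w.2) =O[𝓝 0]
      fun w => ‖w‖ ^ 2 := by
  set u : 𝕜 × 𝕜 → 𝕜 := fun w => 1 - p * w.1
  have hu_cont : Continuous u := by fun_prop
  have hu_bdd : u =O[𝓝 0] fun _ => (1 : ℝ) := (hu_cont.tendsto 0).isBigO_one ℝ
  have hfst : (fun w : 𝕜 × 𝕜 => w.1) =O[𝓝 0] fun w => ‖w‖ :=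
    isBigO_fst_prod'.trans (isBigO_norm_right.2 (isBigO_refl _ _))
  have hsnd : (fun w : 𝕜 × 𝕜 => w.2) =O[𝓝 0] fun w => ‖w‖ :=
    isBigO_snd_prod'.trans (isBigO_norm_right.2 (isBigO_refl _ _))
  have hquad : (fun w : 𝕜 × 𝕜 => p * w.1 * (p * w.1 - 2) * (p * w.1 + (q + 1) * w.2))
      =O[𝓝 0] fun w => ‖w‖ ^ 2 := by
    have h₁ : (fun w : 𝕜 × 𝕜 => p * w.1 - 2) =O[𝓝 0] fun _ => (1 : ℝ) :=
      ((by fun_prop : Continuous fun w : 𝕜 × 𝕜 => p * w.1 - 2).tendsto 0).isBigO_one ℝ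
    have h₂ := ((hfst.const_mul_left p).mul h₁).mul
      ((hfst.const_mul_left p).add (hsnd.const_mul_left (q + 1)))
    simpa only [mul_one, ← sq] using h₂
  have hrem : (fun w : 𝕜 × 𝕜 => u w * (α (u w * w.1) (u w * w.2) - 1 - p * (u w * w.1)
      - (q + 1) * (u w * w.2))) =O[𝓝 0] fun w => ‖w‖ ^ 2 := by
    have hscale : Tendsto (fun w => u w • w) (𝓝 0) (𝓝 0) := by
      have : Continuous fun w => u w • w := hu_cont.smul continuous_id
      exact this.tendsto' 0 0 (smul_zero _)
    have h₁ := hα.comp_tendsto hscale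
    have h₂ : (fun w : 𝕜 × 𝕜 => ‖u w • w‖ ^ 2) =O[𝓝 0] fun w => ‖w‖ ^ 2 := by
      simp only [norm_smul, mul_pow]
      simpa only [one_pow, one_mul] using (hu_bdd.norm_left.pow 2).mul (isBigO_refl _ _)
    simpa only [one_mul, Function.comp_def, Prod.smul_fst, Prod.smul_snd, smul_eq_mul] using
      hu_bdd.mul (h₁.trans h₂)
  simpa only [normalizedCoeff_sub] using hquad.add hrem

end Normalization

theorem stmt19_general (p q : ℂ) (α : ℂ → ℂ → ℂ)
    (C δ : ℝ) (hδ : 0 < δ)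
    (hform : ∀ ε x : ℂ, ‖ε‖ < δ → ‖x‖ < δ →
      ‖α ε x - 1 - p * ε - (q + 1) * x‖ ≤ C * (‖x‖ ^ 2 + ‖ε‖ ^ 2))
    (f : ℂ → ℂ → ℂ) (hf : ∀ ε x, f ε x = x + (x ^ 2 + ε ^ 2) * α ε x) :
    ∃ (α' : ℂ → ℂ → ℂ) (q' : ℂ) (C' δ' : ℝ), 0 < δ' ∧
      ∀ ε' x' : ℂ, ‖ε'‖ < δ' → ‖x'‖ < δ' →
        (1 - p * ε') * (x' + (x' ^ 2 + ε' ^ 2) * α' ε' x') =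
          f (ε' - p * ε' ^ 2) ((1 - p * ε') * x') ∧
        ‖α' ε' x' - 1 - (q' + 1) * x'‖ ≤ C' * (‖x'‖ ^ 2 + ‖ε'‖ ^ 2) := by
  have hα : (fun w : ℂ × ℂ => α w.1 w.2 - 1 - p * w.1 - (q + 1) * w.2) =O[𝓝 0]
      fun w => ‖w‖ ^ 2 :=
    exists_bound_on_ball_iff_isBigO.1 ⟨C, δ, hδ, hform⟩
  obtain ⟨C', δ', hδ', hbound⟩ :=
    (exists_bound_on_ball_iff_isBigO
      (g := fun ε x => normalizedCoeff p α ε x - 1 - (q + 1) * x)).2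
      (isBigO_normalizedCoeff_sub hα)
  exact ⟨normalizedCoeff p α, q, C', δ', hδ', fun ε x hε hx =>
    ⟨mul_normalizedCoeff_family hf p ε x, hbound ε x hε hx⟩⟩

/-- Normalization: for `f_ε(x) = x + (x² + ε²)α_ε(x)` with
`α_ε(x) = 1 + pε + (q+1)x + O(|x|² + |ε|²)`, the reparametrization `ε = ε̂ − pε̂²`
together with `x = (1 − pε̂)x̂` yields a family of the same form whose coefficient
function has no `ε̂`-linear term: `α̂_ε̂(x̂) = 1 + (q̂+1)x̂ + O(|x̂|² + |ε̂|²)`. -/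
theorem stmt19 (p q : ℂ) (α : ℂ → ℂ → ℂ)
    (hα : AnalyticAt ℂ (fun w : ℂ × ℂ => α w.1 w.2) 0)
    (C δ : ℝ) (hδ : 0 < δ)
    (hform : ∀ ε x : ℂ, ‖ε‖ < δ → ‖x‖ < δ →
      ‖α ε x - 1 - p * ε - (q + 1) * x‖ ≤ C * (‖x‖ ^ 2 + ‖ε‖ ^ 2))
    (f : ℂ → ℂ → ℂ) (hf : ∀ ε x, f ε x = x + (x ^ 2 + ε ^ 2) * α ε x) :
    ∃ (α' : ℂ → ℂ → ℂ) (q' : ℂ) (C' δ' : ℝ), 0 < δ' ∧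
      ∀ ε' x' : ℂ, ‖ε'‖ < δ' → ‖x'‖ < δ' →
        (1 - p * ε') * (x' + (x' ^ 2 + ε' ^ 2) * α' ε' x') =
          f (ε' - p * ε' ^ 2) ((1 - p * ε') * x') ∧
        ‖α' ε' x' - 1 - (q' + 1) * x'‖ ≤ C' * (‖x'‖ ^ 2 + ‖ε'‖ ^ 2) :=
  stmt19_general p q α C δ hδ hform f hf
end
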